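/- arXiv:1808.04918 — 2 statements merged into one kernel-verified Lean document; each statement's English description precedes it below -/
import Mathlib

section
/- For every standard Young tableau T of skew shape λ/μ: (1) if Z ∈ Rp_SE(T) and Z′ is a cell of λ/μ weakly south and weakly east of Z, then Z′ ∈ Rp_SE(T); (2) Rp_SE(T) is a skew shape, i.e., there exist Young diagrams μ″ ⊆ λ″ such that Rp_SE(T) is the set of cells of λ″ not in μ″. -/
/-!
Common definitions for skew shapes, standard Young tableaux, the southeast
boundary, southeast min-unimodal sets, the southeast rotation `Rot_SE`,
balance, balance points, and the map `Θ`, following the paper.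

Cells are pairs `(i, j) : ℕ × ℕ` (row `i` counted from the top, column `j`
counted from the left).  South means larger row index, east means larger
column index.
-/

open scoped Classical

namespace SkewSE

abbrev Cell : Type := ℕ × ℕ

/-- `a` is weakly southwest of `b`: weakly south (row ≥) and weakly west (col ≤). -/
def weakSW (a b : Cell) : Prop := b.1 ≤ a.1 ∧ a.2 ≤ b.2

/-- `a` is strictly southwest of `b`: strictly south and strictly west. -/
def strictSW (a b : Cell) : Prop := b.1 < a.1 ∧ a.2 < b.2

/-- The (strict) southwest-to-northeast order on cells:
`a` comes before `b` if `a` is weakly southwest of `b` and `a ≠ b`. -/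
def swLT (a b : Cell) : Prop := weakSW a b ∧ a ≠ b

/-- Two cells are adjacent if they share an edge. -/
def adjacent (a b : Cell) : Prop :=
  (a.1 = b.1 ∧ (a.2 = b.2 + 1 ∨ b.2 = a.2 + 1)) ∨
  (a.2 = b.2 ∧ (a.1 = b.1 + 1 ∨ b.1 = a.1 + 1))

/-- `a` and `b` lie in the same connected component of the set of cells `P`
(with respect to edge-adjacency). -/
def sameComp (P : Finset Cell) (a b : Cell) : Prop :=
  a ∈ P ∧ b ∈ P ∧ Relation.ReflTransGen (fun x y => x ∈ P ∧ y ∈ P ∧ adjacent x y) a b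

/-- The cells of the skew shape `λ/μ`. -/
def skewCells (lam mu : YoungDiagram) : Finset Cell := lam.cells \ mu.cells

/-- `n = |λ/μ|`, the number of cells. -/
def numCells (lam mu : YoungDiagram) : ℕ := (skewCells lam mu).card

/-- A set of cells is a skew shape if it is the difference of two Young diagrams. -/
def IsSkewShape (P : Finset Cell) : Prop :=
  ∃ lam' mu' : YoungDiagram, mu' ≤ lam' ∧ P = lam'.cells \ mu'.cells

/-- A standard Young tableau of skew shape `λ/μ`: a bijective filling of the
cells by `{1,…,n}`, strictly increasing west-to-east along rows and
north-to-south down columns.  (Entries are `0` off the shape.) -/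
structure SYT (lam mu : YoungDiagram) where
  entry : Cell → ℕ
  bijOn : Set.BijOn entry (skewCells lam mu : Set Cell)
    ((Finset.Icc 1 (numCells lam mu) : Finset ℕ) : Set ℕ)
  row_lt : ∀ i j : ℕ, (i, j) ∈ skewCells lam mu → (i, j + 1) ∈ skewCells lam mu →
    entry (i, j) < entry (i, j + 1)
  col_lt : ∀ i j : ℕ, (i, j) ∈ skewCells lam mu → (i + 1, j) ∈ skewCells lam mu →
    entry (i, j) < entry (i + 1, j)
  zero_outside : ∀ c : Cell, c ∉ skewCells lam mu → entry c = 0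

variable {lam mu : YoungDiagram}

/-- `pos T x` is the cell of `T` containing the entry `x`. -/
noncomputable def pos (T : SYT lam mu) (x : ℕ) : Cell :=
  if h : ∃ c ∈ skewCells lam mu, T.entry c = x then h.choose else (0, 0)

/-- The southeast boundary of `λ/μ`: cells `(i,j)` with `(i+1, j+1) ∉ λ/μ`. -/
def SEboundary (lam mu : YoungDiagram) : Finset Cell :=
  (skewCells lam mu).filter (fun c => (c.1 + 1, c.2 + 1) ∉ skewCells lam mu)

/-- `S` is southeast min-unimodal in `T`: the cells `pos_T(S)` lie on the
southeast boundary, in a single connected component of `λ/μ`, are totally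
ordered southwest-to-northeast, and the entries, read in the
southwest-to-northeast order of their cells, strictly decrease until
reaching `min S` and then strictly increase. -/
def MinUnimodalSE (T : SYT lam mu) (S : Finset ℕ) : Prop :=
  ∃ hne : S.Nonempty,
    S ⊆ Finset.Icc 1 (numCells lam mu) ∧
    (∀ x ∈ S, pos T x ∈ SEboundary lam mu) ∧
    (∀ x ∈ S, ∀ y ∈ S, sameComp (skewCells lam mu) (pos T x) (pos T y)) ∧
    (∀ x ∈ S, ∀ y ∈ S, weakSW (pos T x) (pos T y) ∨ weakSW (pos T y) (pos T x)) ∧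
    (∀ x ∈ S, ∀ y ∈ S, swLT (pos T x) (pos T y) →
      (weakSW (pos T y) (pos T (S.min' hne)) → y < x) ∧
      (weakSW (pos T (S.min' hne)) (pos T x) → x < y))

/-- `k` such that `Rc_SE(T) = {n-k+1, …, n}`: the maximal `k ≥ 1` for which
this set is southeast min-unimodal in `T`. -/
noncomputable def kSE (T : SYT lam mu) : ℕ :=
  sSup {k : ℕ | 1 ≤ k ∧ k ≤ numCells lam mu ∧
    MinUnimodalSE T (Finset.Icc (numCells lam mu - k + 1) (numCells lam mu))}

/-- `Rc_SE(T) = {n-k+1, …, n}` with `k` maximal as above. -/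
noncomputable def RcSE (T : SYT lam mu) : Finset ℕ :=
  Finset.Icc (numCells lam mu - kSE T + 1) (numCells lam mu)

/-- `Rp_SE(T) = pos_T(Rc_SE(T))`. -/
noncomputable def RpSE (T : SYT lam mu) : Finset Cell := (RcSE T).image (pos T)

/-- `Y = pos_T(min Rc_SE(T))`. -/
noncomputable def Ycell (T : SYT lam mu) : Cell :=
  pos T (numCells lam mu - kSE T + 1)

/-- The position of the largest entry `n`. -/
noncomputable def posN (T : SYT lam mu) : Cell := pos T (numCells lam mu)

/-- `pos_T(n)` is the southwesternmost cell of `Rp_SE(T)`. -/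
def SWmostAtN (T : SYT lam mu) : Prop := ∀ c ∈ RpSE T, weakSW (posN T) c

/-- `pos_T(n)` is the northeasternmost cell of `Rp_SE(T)`. -/
def NEmostAtN (T : SYT lam mu) : Prop := ∀ c ∈ RpSE T, weakSW c (posN T)

/-- The southernmost cell of `P` in the column of `Y`. -/
noncomputable def southEnd (P : Finset Cell) (Y : Cell) : Cell :=
  if h : ∃ c ∈ P, c.2 = Y.2 ∧ ∀ d ∈ P, d.2 = Y.2 → d.1 ≤ c.1 then h.choose else Y

/-- The easternmost cell of `P` in the row of `Y`. -/
noncomputable def eastEnd (P : Finset Cell) (Y : Cell) : Cell :=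
  if h : ∃ c ∈ P, c.1 = Y.1 ∧ ∀ d ∈ P, d.1 = Y.1 → d.2 ≤ c.2 then h.choose else Y

/-- The southeast rotation endpoint `X` of `T`. -/
noncomputable def Xend (T : SYT lam mu) : Cell :=
  if SWmostAtN T then
    if ∃ c ∈ RpSE T, c.2 = (Ycell T).2 ∧ (Ycell T).1 < c.1 then
      southEnd (RpSE T) (Ycell T)
    else eastEnd (RpSE T) (Ycell T)
  else
    if ∃ c ∈ RpSE T, c.1 = (Ycell T).1 ∧ (Ycell T).2 < c.2 then
      eastEnd (RpSE T) (Ycell T)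
    else southEnd (RpSE T) (Ycell T)

/-- The cells `Z_1, …, Z_j` of `Rp_SE(T)` lying weakly between `pos_T(n)`
and `X` in the southwest-to-northeast order. -/
noncomputable def chainSE (T : SYT lam mu) : Finset Cell :=
  (RpSE T).filter (fun c =>
    (weakSW (posN T) c ∧ weakSW c (Xend T)) ∨ (weakSW (Xend T) c ∧ weakSW c (posN T)))

/-- The next cell of `P` after `c` in southwest-to-northeast order. -/
noncomputable def nextNE (P : Finset Cell) (c : Cell) : Cell :=
  if h : ∃ d ∈ P, swLT c d ∧ ∀ e ∈ P, swLT c e → weakSW d e then h.choose else c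

/-- The next cell of `P` before `c` in southwest-to-northeast order. -/
noncomputable def nextSW (P : Finset Cell) (c : Cell) : Cell :=
  if h : ∃ d ∈ P, swLT d c ∧ ∀ e ∈ P, swLT e c → weakSW e d then h.choose else c

/-- The filling `Rot_SE(T)` produced by the southeast rotation:
`n` moves to `X`, and the entries of the cells of `Rp_SE(T)` weakly between
`pos_T(n)` and `X` are each shifted one position towards `pos_T(n)`;
all other entries are unchanged. -/
noncomputable def rotEntry (T : SYT lam mu) (c : Cell) : ℕ :=
  if c ∈ chainSE T then
    if c = Xend T then numCells lam mu
    else if SWmostAtN T then T.entry (nextNE (chainSE T) c)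
    else T.entry (nextSW (chainSE T) c)
  else T.entry c

/-- The southeast rotation as a map `SYT(λ/μ) → SYT(λ/μ)`
(well-defined since the rotated filling is again standard). -/
noncomputable def RotSE (T : SYT lam mu) : SYT lam mu :=
  if h : ∃ R : SYT lam mu, R.entry = rotEntry T then h.choose else T

/-- The descent set `Des(T) = {i : pos_T(i+1) is strictly south of pos_T(i)}`. -/
noncomputable def Des (T : SYT lam mu) : Finset ℕ :=
  (Finset.Icc 1 (numCells lam mu - 1)).filter
    (fun i => (pos T i).1 < (pos T (i + 1)).1)

/-- `S` is balanced with respect to `W` in `U`: the entries in the cells of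
`pos_U(S)` weakly northeast of `W` increase from southwest to northeast, and
the entries in the cells of `pos_U(S)` weakly southwest of `W` increase from
northeast to southwest. -/
def Balanced (U : SYT lam mu) (S : Finset ℕ) (W : Cell) : Prop :=
  (∀ x ∈ S, ∀ y ∈ S, weakSW W (pos U x) → weakSW W (pos U y) →
    swLT (pos U x) (pos U y) → x < y) ∧
  (∀ x ∈ S, ∀ y ∈ S, weakSW (pos U x) W → weakSW (pos U y) W →
    swLT (pos U y) (pos U x) → x < y)

/-- `a` and `b` are distinct and consecutive in the southwest-to-northeast
order on the set of cells `Q`. -/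
def consecutiveIn (Q : Finset Cell) (a b : Cell) : Prop :=
  a ∈ Q ∧ b ∈ Q ∧ (swLT a b ∨ swLT b a) ∧
  ∀ c ∈ Q, ¬ (swLT a c ∧ swLT c b) ∧ ¬ (swLT b c ∧ swLT c a)

/-- The northern balance point of a southeast exterior corner `Z`: the cell
of the southeast boundary weakly due north of `Z` farthest from `Z`. -/
noncomputable def northBP (lam mu : YoungDiagram) (Z : Cell) : Cell :=
  if h : ∃ c ∈ SEboundary lam mu, c.2 = Z.2 ∧ c.1 ≤ Z.1 ∧
      ∀ d ∈ SEboundary lam mu, d.2 = Z.2 → d.1 ≤ Z.1 → c.1 ≤ d.1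
  then h.choose else Z

/-- The western balance point of a southeast exterior corner `Z`: the cell
of the southeast boundary weakly due west of `Z` farthest from `Z`. -/
noncomputable def westBP (lam mu : YoungDiagram) (Z : Cell) : Cell :=
  if h : ∃ c ∈ SEboundary lam mu, c.1 = Z.1 ∧ c.2 ≤ Z.2 ∧
      ∀ d ∈ SEboundary lam mu, d.1 = Z.1 → d.2 ≤ Z.2 → c.2 ≤ d.2
  then h.choose else Z

/-- Property (i) for `S = {n-1, …, n-k+1}` in `R`:
`S` is southeast min-unimodal in `R` and lies in the same connected
component of `λ/μ` as `pos_R(n)` (vacuous when `S` is empty, i.e. `k = 1`). -/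
def PropI (R : SYT lam mu) (k : ℕ) : Prop :=
  (Finset.Icc (numCells lam mu - k + 1) (numCells lam mu - 1)).Nonempty →
    MinUnimodalSE R (Finset.Icc (numCells lam mu - k + 1) (numCells lam mu - 1)) ∧
    ∀ x ∈ Finset.Icc (numCells lam mu - k + 1) (numCells lam mu - 1),
      sameComp (skewCells lam mu) (pos R x) (pos R (numCells lam mu))

/-- `pos_R(S)` contains the northern neighbor of `pos_R(n)`,
for `S = {n-1, …, n-k+1}`. -/
def hasNorthNbr (R : SYT lam mu) (k : ℕ) : Prop :=
  ∃ x ∈ Finset.Icc (numCells lam mu - k + 1) (numCells lam mu - 1),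
    (pos R x).2 = (pos R (numCells lam mu)).2 ∧
    (pos R x).1 + 1 = (pos R (numCells lam mu)).1

/-- `pos_R(S)` contains the western neighbor of `pos_R(n)`,
for `S = {n-1, …, n-k+1}`. -/
def hasWestNbr (R : SYT lam mu) (k : ℕ) : Prop :=
  ∃ x ∈ Finset.Icc (numCells lam mu - k + 1) (numCells lam mu - 1),
    (pos R x).1 = (pos R (numCells lam mu)).1 ∧
    (pos R x).2 + 1 = (pos R (numCells lam mu)).2

/-- Property (ii) for `S = {n-1, …, n-k+1}` in `R`. -/
def PropII (R : SYT lam mu) (k : ℕ) : Prop :=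
  ¬ (hasNorthNbr R k ∧ hasWestNbr R k) ∧
  (hasNorthNbr R k →
    Balanced R (Finset.Icc (numCells lam mu - k + 1) (numCells lam mu - 1))
      (northBP lam mu (pos R (numCells lam mu)))) ∧
  (hasWestNbr R k →
    Balanced R (Finset.Icc (numCells lam mu - k + 1) (numCells lam mu - 1))
      (westBP lam mu (pos R (numCells lam mu)))) ∧
  (¬ hasNorthNbr R k → ¬ hasWestNbr R k →
    Balanced R (Finset.Icc (numCells lam mu - k + 1) (numCells lam mu - 1))
      (northBP lam mu (pos R (numCells lam mu))) ∧
    Balanced R (Finset.Icc (numCells lam mu - k + 1) (numCells lam mu - 1))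
      (westBP lam mu (pos R (numCells lam mu))))

/-- The maximal `k` such that `S = {n-1, …, n-k+1}` satisfies properties
(i) and (ii) in `R`; used to define `Θ`. -/
noncomputable def kTheta (R : SYT lam mu) : ℕ :=
  sSup {k : ℕ | 1 ≤ k ∧ k ≤ numCells lam mu ∧ PropI R k ∧ PropII R k}

/-- The southwesternmost cell of `P`. -/
noncomputable def SWend (P : Finset Cell) : Cell :=
  if h : ∃ c ∈ P, ∀ d ∈ P, weakSW c d then h.choose else (0, 0)

/-- The northeasternmost cell of `P`. -/
noncomputable def NEend (P : Finset Cell) : Cell :=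
  if h : ∃ c ∈ P, ∀ d ∈ P, weakSW d c then h.choose else (0, 0)

/-- `P = pos_R({n, …, n-k+1})` for `k = kTheta R`. -/
noncomputable def PTheta (R : SYT lam mu) : Finset Cell :=
  (Finset.Icc (numCells lam mu - kTheta R + 1) (numCells lam mu)).image (pos R)

/-- `pos_R(n - k + 1)` for `k = kTheta R`. -/
noncomputable def posMTheta (R : SYT lam mu) : Cell :=
  pos R (numCells lam mu - kTheta R + 1)

/-- `Θ` moves `n` to the southwestern end exactly when: `pos_R(n)` and
`pos_R(n-k+1)` lie in different connected components of `P` and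
`pos_R(n-k+1)` is on the southwestern side, or they lie in the same
connected component and `pos_R(n-k+1)` is on the northeastern side. -/
def destIsSW (R : SYT lam mu) : Prop :=
  weakSW (posMTheta R) (posN R) ↔ ¬ sameComp (PTheta R) (posN R) (posMTheta R)

/-- The destination cell for `n` under `Θ`. -/
noncomputable def destTheta (R : SYT lam mu) : Cell :=
  if destIsSW R then SWend (PTheta R) else NEend (PTheta R)

/-- The cells of `P` weakly between the destination cell and `pos_R(n)`. -/
noncomputable def chainTheta (R : SYT lam mu) : Finset Cell :=
  (PTheta R).filter (fun c =>
    (weakSW (destTheta R) c ∧ weakSW c (posN R)) ∨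
    (weakSW (posN R) c ∧ weakSW c (destTheta R)))

/-- The filling `Θ(R)`: `n` moves from `pos_R(n)` to the destination cell,
and each entry occupying a cell of `P` strictly between them is shifted one
position in `P` closer to `pos_R(n)`; all other entries are unchanged. -/
noncomputable def thetaEntry (R : SYT lam mu) (c : Cell) : ℕ :=
  if c ∈ chainTheta R then
    if c = destTheta R then numCells lam mu
    else if destIsSW R then R.entry (nextSW (chainTheta R) c)
    else R.entry (nextNE (chainTheta R) c)
  else R.entry c

/-- The map `Θ` as a map on standard Young tableaux. -/
noncomputable def Theta (R : SYT lam mu) : SYT lam mu :=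
  if h : ∃ U : SYT lam mu, U.entry = thetaEntry R then h.choose else R

/-- A single-column rectangle with northern endpoint `Y` and southern endpoint `X`. -/
def IsColSeg (P : Finset Cell) (Y X : Cell) : Prop :=
  Y.2 = X.2 ∧ Y.1 ≤ X.1 ∧ P = (Finset.Icc Y.1 X.1).image (fun i => (i, Y.2))

/-- A single-row rectangle with western endpoint `Y` and eastern endpoint `X`. -/
def IsRowSeg (P : Finset Cell) (Y X : Cell) : Prop :=
  Y.1 = X.1 ∧ Y.2 ≤ X.2 ∧ P = (Finset.Icc Y.2 X.2).image (fun j => (Y.1, j))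

/-- A hook with northwestern corner `Y`, southern endpoint `A`, and eastern
endpoint `B` (both arms of positive length). -/
def IsHook (P : Finset Cell) (Y A B : Cell) : Prop :=
  A.2 = Y.2 ∧ Y.1 < A.1 ∧ B.1 = Y.1 ∧ Y.2 < B.2 ∧
  P = (Finset.Icc Y.1 A.1).image (fun i => (i, Y.2)) ∪
      (Finset.Icc Y.2 B.2).image (fun j => (Y.1, j))

end SkewSE

namespace SkewSE

variable {lam mu : YoungDiagram}

lemma mem_skew_iff {c : Cell} :
    c ∈ skewCells lam mu ↔ c ∈ lam.cells ∧ c ∉ mu.cells := Finset.mem_sdiff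

lemma pos_entry (T : SYT lam mu) {c : Cell} (hc : c ∈ skewCells lam mu) :
    pos T (T.entry c) = c := by
  have h : ∃ d ∈ skewCells lam mu, T.entry d = T.entry c := ⟨c, hc, rfl⟩
  unfold pos
  rw [dif_pos h]
  exact T.bijOn.injOn (by exact_mod_cast h.choose_spec.1) (by exact_mod_cast hc)
    h.choose_spec.2

lemma entry_mem (T : SYT lam mu) {c : Cell} (hc : c ∈ skewCells lam mu) :
    T.entry c ∈ Finset.Icc 1 (numCells lam mu) := by
  have := T.bijOn.mapsTo (by exact_mod_cast hc)
  exact_mod_cast this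

lemma pos_spec (T : SYT lam mu) {x : ℕ} (hx : x ∈ Finset.Icc 1 (numCells lam mu)) :
    pos T x ∈ skewCells lam mu ∧ T.entry (pos T x) = x := by
  have hx' : (x : ℕ) ∈ ((Finset.Icc 1 (numCells lam mu) : Finset ℕ) : Set ℕ) := by
    exact_mod_cast hx
  obtain ⟨c, hc, hcx⟩ := T.bijOn.surjOn hx'
  have h : ∃ d ∈ skewCells lam mu, T.entry d = x := ⟨c, by exact_mod_cast hc, hcx⟩
  unfold pos
  rw [dif_pos h]
  exact ⟨h.choose_spec.1, h.choose_spec.2⟩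

/-- Entries weakly increase going east along a row within the skew shape. -/
lemma entry_row_mono (T : SYT lam mu) :
    ∀ d i j, (i, j) ∈ skewCells lam mu → (i, j + d) ∈ skewCells lam mu →
      T.entry (i, j) ≤ T.entry (i, j + d) := by
  intro d
  induction d with
  | zero => intro i j h _; simp
  | succ d ih =>
    intro i j h1 h2
    have hmid : (i, j + d) ∈ skewCells lam mu := by
      rw [mem_skew_iff] at h1 h2 ⊢
      constructor
      · exact lam.isLowerSet (by exact ⟨le_refl i, by omega⟩) h2.1
      · intro hm
        exact h1.2 (mu.isLowerSet (by exact ⟨le_refl i, by omega⟩) hm)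
    have h2' : (i, j + d + 1) ∈ skewCells lam mu := by
      have : j + (d + 1) = j + d + 1 := by omega
      rwa [this] at h2
    have := T.row_lt i (j + d) hmid h2'
    have : T.entry (i, j) ≤ T.entry (i, j + d + 1) := le_trans (ih i j h1 hmid) this.le
    have heq : j + (d + 1) = j + d + 1 := by omega
    rwa [heq]

/-- Entries weakly increase going south along a column within the skew shape. -/
lemma entry_col_mono (T : SYT lam mu) :
    ∀ d i j, (i, j) ∈ skewCells lam mu → (i + d, j) ∈ skewCells lam mu →
      T.entry (i, j) ≤ T.entry (i + d, j) := by
  intro d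
  induction d with
  | zero => intro i j h _; simp
  | succ d ih =>
    intro i j h1 h2
    have hmid : (i + d, j) ∈ skewCells lam mu := by
      rw [mem_skew_iff] at h1 h2 ⊢
      constructor
      · exact lam.isLowerSet (by exact ⟨by omega, le_refl j⟩) h2.1
      · intro hm
        exact h1.2 (mu.isLowerSet (by exact ⟨by omega, le_refl j⟩) hm)
    have h2' : (i + d + 1, j) ∈ skewCells lam mu := by
      have : i + (d + 1) = i + d + 1 := by omega
      rwa [this] at h2
    have := T.col_lt (i + d) j hmid h2'
    have : T.entry (i, j) ≤ T.entry (i + d + 1, j) := le_trans (ih i j h1 hmid) this.le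
    have heq : i + (d + 1) = i + d + 1 := by omega
    rwa [heq]

/-- Either `Rp_SE(T)` is empty, or `Rc_SE(T)` is southeast min-unimodal. -/
lemma kSE_cases (T : SYT lam mu) :
    RpSE T = ∅ ∨ MinUnimodalSE T (RcSE T) := by
  by_cases hK : {k : ℕ | 1 ≤ k ∧ k ≤ numCells lam mu ∧
      MinUnimodalSE T (Finset.Icc (numCells lam mu - k + 1) (numCells lam mu))}.Nonempty
  · right
    have hb : BddAbove {k : ℕ | 1 ≤ k ∧ k ≤ numCells lam mu ∧
        MinUnimodalSE T (Finset.Icc (numCells lam mu - k + 1) (numCells lam mu))} :=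
      ⟨numCells lam mu, fun k hk => hk.2.1⟩
    have hmem := Nat.sSup_mem hK hb
    exact hmem.2.2
  · left
    have h0 : kSE T = 0 := by
      unfold kSE
      rw [Set.not_nonempty_iff_eq_empty] at hK
      rw [hK, csSup_empty]
      rfl
    have : RcSE T = ∅ := by
      unfold RcSE
      rw [h0]
      exact Finset.Icc_eq_empty (by omega)
    unfold RpSE
    rw [this, Finset.image_empty]

/-- Part (1): `Rp_SE(T)` is closed downwards to the southeast inside `λ/μ`. -/
lemma rpSE_closed (T : SYT lam mu) :
    ∀ Z ∈ RpSE T, ∀ Z' ∈ skewCells lam mu,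
      Z.1 ≤ Z'.1 → Z.2 ≤ Z'.2 → Z' ∈ RpSE T := by
  intro Z hZ Z' hZ' hr hc
  rcases kSE_cases T with he | hmu
  · rw [he] at hZ; exact absurd hZ (Finset.notMem_empty Z)
  obtain ⟨hne, hsub', hbd, -⟩ := hmu
  rw [RpSE, Finset.mem_image] at hZ
  obtain ⟨x, hx, hxZ⟩ := hZ
  have hxI : x ∈ Finset.Icc 1 (numCells lam mu) := hsub' hx
  obtain ⟨hZsk, hZx⟩ := pos_spec T hxI
  rw [hxZ] at hZsk hZx
  have hSE : Z ∈ SEboundary lam mu := by rw [← hxZ]; exact hbd x hx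
  have hcorner : (Z.1 + 1, Z.2 + 1) ∉ skewCells lam mu :=
    (Finset.mem_filter.mp hSE).2
  -- dichotomy: Z' in the same row or same column as Z
  have hdich : Z'.1 = Z.1 ∨ Z'.2 = Z.2 := by
    by_contra hcon
    push_neg at hcon
    have hr' : Z.1 + 1 ≤ Z'.1 := by omega
    have hc' : Z.2 + 1 ≤ Z'.2 := by omega
    apply hcorner
    rw [mem_skew_iff] at hZ' hZsk ⊢
    constructor
    · exact lam.isLowerSet (by exact ⟨hr', hc'⟩) (by
        have := hZ'.1
        simpa using this)
    · intro hm
      exact hZsk.2 (mu.isLowerSet (by exact ⟨by omega, by omega⟩) hm)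
  -- the entry at Z' is ≥ x, hence in Rc_SE(T)
  have hent : x ≤ T.entry Z' := by
    rcases hdich with h | h
    · have : Z' = (Z.1, Z.2 + (Z'.2 - Z.2)) := by
        apply Prod.ext <;> simp [h] <;> omega
      rw [← hZx, this]
      exact entry_row_mono T (Z'.2 - Z.2) Z.1 Z.2 (by simpa using hZsk)
        (by rw [← this]; exact hZ')
    · have : Z' = (Z.1 + (Z'.1 - Z.1), Z.2) := by
        apply Prod.ext <;> simp [h] <;> omega
      rw [← hZx, this]
      exact entry_col_mono T (Z'.1 - Z.1) Z.1 Z.2 (by simpa using hZsk)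
        (by rw [← this]; exact hZ')
  have hentI := entry_mem T hZ'
  rw [Finset.mem_Icc] at hentI
  have hxRc : (numCells lam mu) - kSE T + 1 ≤ x ∧ x ≤ numCells lam mu := by
    rw [RcSE, Finset.mem_Icc] at hx; exact hx
  have hmemRc : T.entry Z' ∈ RcSE T := by
    rw [RcSE, Finset.mem_Icc]
    exact ⟨le_trans hxRc.1 hent, hentI.2⟩
  rw [RpSE, Finset.mem_image]
  exact ⟨T.entry Z', hmemRc, pos_entry T hZ'⟩

/-- `Rp_SE(T)` consists of cells of the skew shape. -/
lemma rpSE_subset (T : SYT lam mu) : RpSE T ⊆ skewCells lam mu := by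
  intro Z hZ
  rcases kSE_cases T with he | hmu
  · rw [he] at hZ; exact absurd hZ (Finset.notMem_empty Z)
  obtain ⟨hne, hsub', hbd, -⟩ := hmu
  rw [RpSE, Finset.mem_image] at hZ
  obtain ⟨x, hx, hxZ⟩ := hZ
  have := hbd x hx
  rw [hxZ] at this
  exact (Finset.mem_filter.mp this).1

end SkewSE

namespace SkewSE

/-- For every standard Young tableau `T` of shape `λ/μ`:
(1) any cell of `λ/μ` weakly south and weakly east of a cell of `Rp_SE(T)`
is again in `Rp_SE(T)`; (2) `Rp_SE(T)` is a skew shape. -/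
theorem rpSE_closed_SE_and_skew (lam mu : YoungDiagram) (hsub : mu ≤ lam)
    (T : SYT lam mu) :
    (∀ Z ∈ RpSE T, ∀ Z' ∈ skewCells lam mu,
        Z.1 ≤ Z'.1 → Z.2 ≤ Z'.2 → Z' ∈ RpSE T) ∧
    IsSkewShape (RpSE T) := by
  constructor
  · exact rpSE_closed T
  · -- Rp_SE(T) is a skew shape: take λ'' = λ and μ'' = λ \ Rp_SE(T)
    have hP : RpSE T ⊆ lam.cells := fun c hc =>
      (mem_skew_iff.mp (rpSE_subset T hc)).1
    have hlower : IsLowerSet ((lam.cells \ RpSE T : Finset Cell) : Set Cell) := by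
      intro a b hba ha
      simp only [Finset.coe_sdiff, Set.mem_diff, Finset.mem_coe] at ha ⊢
      obtain ⟨hal, hap⟩ := ha
      refine ⟨lam.isLowerSet hba hal, ?_⟩
      intro hbP
      apply hap
      have hbsk : b ∈ skewCells lam mu := rpSE_subset T hbP
      have hask : a ∈ skewCells lam mu := by
        rw [mem_skew_iff]
        refine ⟨hal, ?_⟩
        intro ham
        exact (mem_skew_iff.mp hbsk).2 (mu.isLowerSet hba ham)
      exact rpSE_closed T b hbP a hask hba.1 hba.2
    refine ⟨lam, ⟨lam.cells \ RpSE T, hlower⟩, ?_, ?_⟩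
    · rw [← YoungDiagram.cells_subset_iff]
      exact Finset.sdiff_subset
    · show RpSE T = lam.cells \ (lam.cells \ RpSE T)
      rw [Finset.sdiff_sdiff_eq_self hP]


end SkewSE
end

section
/- For every standard Young tableau T of skew shape λ/μ, the set R_SW = {Z ∈ Rp_SE(T) : Z is weakly southwest of Y}, where Y = pos_T(min Rc_SE(T)), contains no two horizontally adjacent cells (no horizontal 1×2 domino); consequently every connected component of R_SW is a single-column rectangle. Moreover, the entries of T in the cells of R_SW strictly increase from northeast to southwest. -/
/-!
Common definitions for skew shapes, standard Young tableaux, the southeast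
boundary, southeast min-unimodal sets, the southeast rotation `Rot_SE`,
balance, balance points, and the map `Θ`, following the paper.

Cells are pairs `(i, j) : ℕ × ℕ` (row `i` counted from the top, column `j`
counted from the left).  South means larger row index, east means larger
column index.
-/

open scoped Classical

namespace SkewSE

/-- The set `R_SW` of cells of `Rp_SE(T)` weakly southwest of
`Y = pos_T(min Rc_SE(T))`. -/
noncomputable def RSWset {lam mu : YoungDiagram} (T : SYT lam mu) : Finset Cell :=
  (RpSE T).filter (fun c => weakSW c (Ycell T))

/-!
Since `Rc_SE(T)` is southeast min-unimodal, the entries of `T` on the cells of `R_SW`, which all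
lie weakly southwest of the cell `Y` of the minimum, decrease from southwest to northeast. Two
horizontally adjacent cells of `R_SW` would contradict this, because along a row the entries of
a standard tableau increase from west to east. Finally, a connected set of cells containing no
horizontal domino can only use vertical steps, so it is a segment of a single column.
-/

def NoHorizontalDomino (P : Finset Cell) : Prop := ∀ c ∈ P, (c.1, c.2 + 1) ∉ P

namespace NoHorizontalDomino

variable {P : Finset Cell}

lemma adjacent_vertical (hP : NoHorizontalDomino P) {a b : Cell} (ha : a ∈ P) (hb : b ∈ P)
    (hab : adjacent a b) : a.2 = b.2 ∧ (a.1 = b.1 + 1 ∨ b.1 = a.1 + 1) := by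
  rcases hab with ⟨hrow, hcol | hcol⟩ | hvert
  · exact (hP b hb (by rwa [show (b.1, b.2 + 1) = a from Prod.ext hrow.symm hcol.symm])).elim
  · exact (hP a ha (by rwa [show (a.1, a.2 + 1) = b from Prod.ext hrow hcol.symm])).elim
  · exact hvert

lemma sameComp_column (hP : NoHorizontalDomino P) {a b : Cell} (h : sameComp P a b) :
    a.2 = b.2 ∧ ∀ i, min a.1 b.1 ≤ i → i ≤ max a.1 b.1 → (i, a.2) ∈ P := by
  obtain ⟨ha, -, hpath⟩ := h
  induction hpath with
  | refl =>
    refine ⟨rfl, fun i hi₁ hi₂ => ?_⟩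
    obtain rfl : i = a.1 := by omega
    exact ha
  | @tail b c _ hstep ih =>
    obtain ⟨hb, hc, hadj⟩ := hstep
    obtain ⟨hcol, hseg⟩ := ih
    obtain ⟨hbc, hstep⟩ := hP.adjacent_vertical hb hc hadj
    refine ⟨hcol.trans hbc, fun i hi₁ hi₂ => ?_⟩
    by_cases hic : i = c.1
    · subst hic
      exact (Prod.ext rfl (hcol.trans hbc) : (c.1, a.2) = c) ▸ hc
    · exact hseg i (by omega) (by omega)

end NoHorizontalDomino

variable {lam mu : YoungDiagram}

lemma noHorizontalDomino_of_entry_lt (T : SYT lam mu) {P : Finset Cell}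
    (hP : P ⊆ skewCells lam mu) (hlt : ∀ a ∈ P, ∀ b ∈ P, swLT a b → T.entry b < T.entry a) :
    NoHorizontalDomino P := by
  intro c hc hc'
  have hsw : swLT c (c.1, c.2 + 1) := ⟨⟨le_rfl, Nat.le_succ _⟩, fun h => by simp [Prod.ext_iff] at h⟩
  have hrow := T.row_lt c.1 c.2 (hP hc) (hP hc')
  exact (hlt c hc _ hc' hsw).asymm hrow

lemma MinUnimodalSE.lt_of_swLT {T : SYT lam mu} {S : Finset ℕ} (hS : MinUnimodalSE T S)
    (hne : S.Nonempty) {x y : ℕ} (hx : x ∈ S) (hy : y ∈ S) (hxy : swLT (pos T x) (pos T y))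
    (hy_min : weakSW (pos T y) (pos T (S.min' hne))) : y < x := by
  obtain ⟨_, -, -, -, -, hmono⟩ := hS
  exact (hmono x hx y hy hxy).1 hy_min

lemma RcSE_subset_Icc (T : SYT lam mu) : RcSE T ⊆ Finset.Icc 1 (numCells lam mu) :=
  Finset.Icc_subset_Icc (Nat.le_add_left 1 _) le_rfl

lemma minUnimodalSE_RcSE (T : SYT lam mu) (h : (RcSE T).Nonempty) :
    MinUnimodalSE T (RcSE T) := by
  set K := {k : ℕ | 1 ≤ k ∧ k ≤ numCells lam mu ∧
    MinUnimodalSE T (Finset.Icc (numCells lam mu - k + 1) (numCells lam mu))}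
  -- `sSup ∅ = 0`, and `k = 0` would make `Rc_SE(T)` empty.
  have hK : K.Nonempty := by
    by_contra hK
    have hk : kSE T = 0 := by
      change sSup K = 0
      rw [Set.not_nonempty_iff_eq_empty.mp hK, csSup_empty, Nat.bot_eq_zero]
    have h' := Finset.nonempty_Icc.mp h
    rw [hk] at h'
    omega
  exact (Nat.sSup_mem hK ⟨numCells lam mu, fun _ hk => hk.2.1⟩).2.2

lemma Ycell_eq_pos_min' (T : SYT lam mu) (h : (RcSE T).Nonempty) :
    Ycell T = pos T ((RcSE T).min' h) := by
  have hmin : (RcSE T).min' h = numCells lam mu - kSE T + 1 :=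
    ((RcSE T).isLeast_min' h).unique <| by
      rw [RcSE, Finset.coe_Icc]
      exact isLeast_Icc (Finset.nonempty_Icc.mp h)
  rw [hmin, Ycell]

lemma mem_RSWset {T : SYT lam mu} {c : Cell} :
    c ∈ RSWset T ↔ (∃ x ∈ RcSE T, pos T x = c) ∧ weakSW c (Ycell T) := by
  rw [RSWset, Finset.mem_filter, RpSE, Finset.mem_image]

lemma RSWset_subset_skewCells (T : SYT lam mu) : RSWset T ⊆ skewCells lam mu := by
  intro c hc
  obtain ⟨⟨x, hx, rfl⟩, -⟩ := mem_RSWset.mp hc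
  exact (pos_spec T (RcSE_subset_Icc T hx)).1

lemma entry_lt_of_mem_RSWset (T : SYT lam mu) :
    ∀ a ∈ RSWset T, ∀ b ∈ RSWset T, swLT a b → T.entry b < T.entry a := by
  intro a ha b hb hab
  obtain ⟨⟨x, hx, rfl⟩, -⟩ := mem_RSWset.mp ha
  obtain ⟨⟨y, hy, rfl⟩, hyY⟩ := mem_RSWset.mp hb
  have hne : (RcSE T).Nonempty := ⟨x, hx⟩
  rw [(pos_spec T (RcSE_subset_Icc T hx)).2, (pos_spec T (RcSE_subset_Icc T hy)).2]
  rw [Ycell_eq_pos_min' T hne] at hyY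
  exact (minUnimodalSE_RcSE T hne).lt_of_swLT hne hx hy hab hyY

theorem RSW_cols_general (lam mu : YoungDiagram) (T : SYT lam mu) :
    (∀ c ∈ RSWset T, (c.1, c.2 + 1) ∉ RSWset T) ∧
    (∀ a ∈ RSWset T, ∀ b ∈ RSWset T, sameComp (RSWset T) a b →
      a.2 = b.2 ∧ ∀ i : ℕ, b.1 ≤ i → i ≤ a.1 → (i, a.2) ∈ RSWset T) ∧
    (∀ a ∈ RSWset T, ∀ b ∈ RSWset T, swLT a b → T.entry b < T.entry a) := by
  have hlt := entry_lt_of_mem_RSWset T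
  have hdom := noHorizontalDomino_of_entry_lt T (RSWset_subset_skewCells T) hlt
  refine ⟨hdom, fun a _ b _ hab => ?_, hlt⟩
  obtain ⟨hcol, hseg⟩ := hdom.sameComp_column hab
  exact ⟨hcol, fun i hbi hia => hseg i (by omega) (by omega)⟩

/-- `R_SW` contains no horizontal `1 × 2` domino, every
connected component of `R_SW` is a single-column rectangle, and the entries
of `T` in the cells of `R_SW` strictly increase from northeast to southwest. -/
theorem RSW_cols (lam mu : YoungDiagram) (hsub : mu ≤ lam) (T : SYT lam mu) :
    (∀ c ∈ RSWset T, (c.1, c.2 + 1) ∉ RSWset T) ∧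
    (∀ a ∈ RSWset T, ∀ b ∈ RSWset T, sameComp (RSWset T) a b →
      a.2 = b.2 ∧ ∀ i : ℕ, b.1 ≤ i → i ≤ a.1 → (i, a.2) ∈ RSWset T) ∧
    (∀ a ∈ RSWset T, ∀ b ∈ RSWset T, swLT a b → T.entry b < T.entry a) :=
  RSW_cols_general lam mu T

end SkewSE
end
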